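/- Let n ≥ 1, d = 2^n. For every Hermitian d×d complex matrix A and every α : 𝒫ₙ → ℝ, tr[ ( Σ_{P∈𝒫ₙ} α(P) · P A P )² ] = (1/d) · Σ_{R∈𝒫ₙ} ( Σ_{P∈𝒫ₙ} α(P) (−1)^{R·P} )² · tr(R A)². -/

import Mathlib

open scoped Classical Matrix ComplexOrder

/-- The four single-qubit Pauli matrices `I, X, Y, Z`. -/
noncomputable def pauli1 : Fin 4 → Matrix (Fin 2) (Fin 2) ℂ
  | 0 => !![1, 0; 0, 1]
  | 1 => !![0, 1; 1, 0]
  | 2 => !![0, -Complex.I; Complex.I, 0]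
  | 3 => !![1, 0; 0, -1]

/-- The `n`-qubit Pauli operator `P_{f 0} ⊗ ⋯ ⊗ P_{f (n-1)}`, as a matrix indexed by
`Fin n → Fin 2` (a type of cardinality `d = 2^n`). -/
noncomputable def PauliOp (n : ℕ) (f : Fin n → Fin 4) :
    Matrix (Fin n → Fin 2) (Fin n → Fin 2) ℂ :=
  Matrix.of fun s t => ∏ i, pauli1 (f i) (s i) (t i)
/-- `(-1)^{P·Q}`: equals `1` if `P` and `Q` commute and `-1` otherwise. -/
noncomputable def commSign {m : Type*} [Fintype m] (P Q : Matrix m m ℂ) : ℝ :=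
  if P * Q = Q * P then 1 else -1
def mul4 : Fin 4 → Fin 4 → Fin 4 := ![![0,1,2,3],![1,0,3,2],![2,3,0,1],![3,2,1,0]]

noncomputable def ph : Fin 4 → Fin 4 → ℂ :=
  ![![1,1,1,1],![1,1,Complex.I,-Complex.I],![1,-Complex.I,1,Complex.I],![1,Complex.I,-Complex.I,1]]

def sg : Fin 4 → Fin 4 → ℝ := fun a b => if a = 0 ∨ b = 0 ∨ a = b then 1 else -1

example : ∀ a : Fin 4, mul4 a a = 0 := by decide
example : ∀ a b : Fin 4, mul4 a b = mul4 b a := by decide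
example : ∀ a b : Fin 4, mul4 (mul4 a b) a = b := by decide
example : ∀ a b : Fin 4, mul4 a b = 0 ↔ a = b := by decide

lemma ph_self (a : Fin 4) : ph a a = 1 := by fin_cases a <;> simp [ph]
lemma ph_ne_zero (a b : Fin 4) : ph a b ≠ 0 := by
  fin_cases a <;> fin_cases b <;> simp [ph, Matrix.vecHead, Matrix.vecTail, Complex.I_ne_zero]
lemma ph_conj (a b : Fin 4) : ph a b * ph (mul4 a b) a = (sg a b : ℂ) := by
  fin_cases a <;> fin_cases b <;> simp [ph, mul4, sg, Matrix.vecHead, Matrix.vecTail, Complex.I_mul_I] <;> norm_num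
lemma ph_swap (a b : Fin 4) : ph a b = (sg a b : ℂ) * ph b a := by
  fin_cases a <;> fin_cases b <;> simp [ph, mul4, sg, Matrix.vecHead, Matrix.vecTail] <;> norm_num

lemma pauli1_mul_apply (a b : Fin 4) (x y : Fin 2) :
    (pauli1 a * pauli1 b) x y = ph a b * pauli1 (mul4 a b) x y := by
  rw [Matrix.mul_apply, Fin.sum_univ_two]
  fin_cases a <;> fin_cases b <;> fin_cases x <;> fin_cases y <;>
    simp [pauli1, ph, mul4, Matrix.vecHead, Matrix.vecTail] <;> ring

lemma pauli1_trace (a : Fin 4) : (pauli1 a).trace = if a = 0 then 2 else 0 := by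
  fin_cases a <;> simp [pauli1, Matrix.trace, Fin.sum_univ_two] <;> norm_num

lemma pauli1_complete (x y z w : Fin 2) :
    ∑ a : Fin 4, pauli1 a x y * pauli1 a z w = if x = w ∧ y = z then 2 else 0 := by
  rw [Fin.sum_univ_four]
  fin_cases x <;> fin_cases y <;> fin_cases z <;> fin_cases w <;>
    simp [pauli1] <;> ring_nf <;> simp [Complex.I_sq] <;> norm_num


lemma PauliOp_mul {n : ℕ} (f g : Fin n → Fin 4) :
    PauliOp n f * PauliOp n g =
      (∏ i, ph (f i) (g i)) • PauliOp n (fun i => mul4 (f i) (g i)) := by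
  ext s t
  rw [Matrix.mul_apply]
  simp only [PauliOp, Matrix.of_apply, Matrix.smul_apply, smul_eq_mul]
  have h1 : ∀ u : Fin n → Fin 2,
      (∏ i, pauli1 (f i) (s i) (u i)) * ∏ i, pauli1 (g i) (u i) (t i)
        = ∏ i, (pauli1 (f i) (s i) (u i) * pauli1 (g i) (u i) (t i)) := fun u =>
    (Finset.prod_mul_distrib).symm
  simp only [h1]
  rw [show (∑ u : Fin n → Fin 2, ∏ i, (pauli1 (f i) (s i) (u i) * pauli1 (g i) (u i) (t i)))
      = ∏ i, ∑ c : Fin 2, pauli1 (f i) (s i) c * pauli1 (g i) c (t i) from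
    (Fintype.prod_sum (fun i c => pauli1 (f i) (s i) c * pauli1 (g i) c (t i))).symm]
  have h2 : ∀ i : Fin n, (∑ c : Fin 2, pauli1 (f i) (s i) c * pauli1 (g i) c (t i))
      = ph (f i) (g i) * pauli1 (mul4 (f i) (g i)) (s i) (t i) := by
    intro i
    rw [← Matrix.mul_apply, pauli1_mul_apply]
  simp only [h2]
  rw [Finset.prod_mul_distrib]

lemma PauliOp_zero {n : ℕ} : PauliOp n (fun _ => 0) = 1 := by
  ext s t
  simp only [PauliOp, Matrix.of_apply]
  have : ∀ x y : Fin 2, pauli1 0 x y = (1 : Matrix (Fin 2) (Fin 2) ℂ) x y := by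
    intro x y; fin_cases x <;> fin_cases y <;> simp [pauli1]
  simp only [this, Matrix.one_apply]
  by_cases h : s = t
  · simp [h]
  · rw [if_neg h]
    obtain ⟨i, hi⟩ : ∃ i, s i ≠ t i := by
      by_contra hc; push_neg at hc; exact h (funext hc)
    exact Finset.prod_eq_zero (Finset.mem_univ i) (by simp [hi])

lemma PauliOp_sq {n : ℕ} (f : Fin n → Fin 4) : PauliOp n f * PauliOp n f = 1 := by
  rw [PauliOp_mul]
  have : ∀ a : Fin 4, mul4 a a = 0 := by decide
  simp [ph_self, this, PauliOp_zero]

lemma PauliOp_ne_zero {n : ℕ} (f : Fin n → Fin 4) : PauliOp n f ≠ 0 := by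
  intro h
  have := PauliOp_sq f
  rw [h, zero_mul] at this
  exact one_ne_zero this.symm

lemma PauliOp_trace {n : ℕ} (f : Fin n → Fin 4) :
    (PauliOp n f).trace = if f = (fun _ => 0) then (2 : ℂ) ^ n else 0 := by
  unfold Matrix.trace PauliOp
  simp only [Matrix.diag_apply, Matrix.of_apply]
  rw [show (∑ u : Fin n → Fin 2, ∏ i, pauli1 (f i) (u i) (u i))
      = ∏ i, ∑ c : Fin 2, pauli1 (f i) c c from
    (Fintype.prod_sum (fun i c => pauli1 (f i) c c)).symm]
  have h2 : ∀ i : Fin n, (∑ c : Fin 2, pauli1 (f i) c c)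
      = if f i = 0 then (2 : ℂ) else 0 := by
    intro i
    have := pauli1_trace (f i)
    rw [Matrix.trace, Fin.sum_univ_two] at this
    rw [Fin.sum_univ_two]
    exact this
  simp only [h2]
  by_cases h : f = fun _ => 0
  · subst h; simp
  · rw [if_neg h]
    obtain ⟨i, hi⟩ : ∃ i, f i ≠ 0 := by
      by_contra hc; push_neg at hc; exact h (funext hc)
    exact Finset.prod_eq_zero (Finset.mem_univ i) (by simp [hi])

lemma PauliOp_mul_trace {n : ℕ} (f g : Fin n → Fin 4) :
    (PauliOp n f * PauliOp n g).trace = if f = g then (2 : ℂ) ^ n else 0 := by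
  rw [PauliOp_mul, Matrix.trace_smul, PauliOp_trace, smul_eq_mul]
  by_cases h : f = g
  · subst h
    simp [ph_self, show ∀ a : Fin 4, mul4 a a = 0 from by decide]
  · rw [if_neg h, if_neg, mul_zero]
    intro hc
    apply h
    funext i
    have := congrFun hc i
    have hd : ∀ a b : Fin 4, mul4 a b = 0 ↔ a = b := by decide
    exact (hd _ _).mp this


lemma smul_cancel_ne_zero {m : Type*} [Fintype m] [DecidableEq m]
    {M : Matrix m m ℂ} (hM : M ≠ 0) {a b : ℂ} (h : a • M = b • M) : a = b := by
  by_contra hne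
  apply hM
  have h0 : (a - b) • M = 0 := by rw [sub_smul, h, sub_self]
  exact (smul_eq_zero.mp h0).resolve_left (sub_ne_zero.mpr hne)

lemma PauliOp_conj {n : ℕ} (f g : Fin n → Fin 4) :
    PauliOp n f * PauliOp n g * PauliOp n f
      = (((∏ i, sg (f i) (g i)) : ℝ) : ℂ) • PauliOp n g := by
  rw [PauliOp_mul, smul_mul_assoc, PauliOp_mul, smul_smul]
  have h1 : (fun i => mul4 (mul4 (f i) (g i)) (f i)) = g := funext fun i => by
    have hd : ∀ a b : Fin 4, mul4 (mul4 a b) a = b := by decide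
    exact hd _ _
  rw [h1]
  congr 1
  rw [← Finset.prod_mul_distrib]
  calc ∏ i, ph (f i) (g i) * ph (mul4 (f i) (g i)) (f i)
      = ∏ i, ((sg (f i) (g i) : ℝ) : ℂ) := Finset.prod_congr rfl fun i _ => ph_conj _ _
    _ = _ := by norm_cast

lemma sg_pm {n : ℕ} (f g : Fin n → Fin 4) :
    (∏ i, sg (f i) (g i)) = 1 ∨ (∏ i, sg (f i) (g i)) = -1 := by
  apply mul_self_eq_one_iff.mp
  rw [← Finset.prod_mul_distrib]
  apply Finset.prod_eq_one
  intro i _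
  unfold sg
  split_ifs <;> norm_num

lemma commSign_eq {n : ℕ} (R P : Fin n → Fin 4) :
    commSign (PauliOp n R) (PauliOp n P) = ∏ i, sg (P i) (R i) := by
  have hsym : (fun i => mul4 (R i) (P i)) = fun i => mul4 (P i) (R i) := funext fun i => by
    have hd : ∀ a b : Fin 4, mul4 a b = mul4 b a := by decide
    exact hd _ _
  have hswap : (∏ i, ph (P i) (R i))
      = ((∏ i, sg (P i) (R i) : ℝ) : ℂ) * ∏ i, ph (R i) (P i) := by
    push_cast
    rw [← Finset.prod_mul_distrib]
    exact Finset.prod_congr rfl fun i _ => ph_swap _ _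
  have hne : (∏ i, ph (R i) (P i)) ≠ 0 :=
    Finset.prod_ne_zero_iff.mpr fun i _ => ph_ne_zero _ _
  have hiff : PauliOp n R * PauliOp n P = PauliOp n P * PauliOp n R
      ↔ (∏ i, sg (P i) (R i) : ℝ) = 1 := by
    rw [PauliOp_mul, PauliOp_mul, hsym]
    constructor
    · intro h
      have hsc := smul_cancel_ne_zero (PauliOp_ne_zero _) h
      rw [hswap] at hsc
      have h1 : ((∏ i, sg (P i) (R i) : ℝ) : ℂ) * ∏ i, ph (R i) (P i)
          = 1 * ∏ i, ph (R i) (P i) := by rw [one_mul, ← hsc]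
      have h2 := mul_right_cancel₀ hne h1
      exact_mod_cast h2
    · intro h
      congr 1
      rw [hswap, h]
      push_cast
      ring
  unfold commSign
  split_ifs with h
  · exact (hiff.mp h).symm
  · rcases sg_pm P R with h1 | h1
    · exact absurd (hiff.mpr h1) h
    · exact h1.symm

lemma PauliOp_complete {n : ℕ} (A : Matrix (Fin n → Fin 2) (Fin n → Fin 2) ℂ) :
    ((2 : ℂ) ^ n)⁻¹ • ∑ R : Fin n → Fin 4, (PauliOp n R * A).trace • PauliOp n R = A := by
  have h2n : (2 : ℂ) ^ n ≠ 0 := pow_ne_zero _ two_ne_zero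
  ext s t
  simp only [Matrix.smul_apply, Matrix.sum_apply, smul_eq_mul]
  have key : ∀ u v : Fin n → Fin 2,
      (∑ R : Fin n → Fin 4, PauliOp n R u v * PauliOp n R s t)
        = if u = t ∧ v = s then (2 : ℂ) ^ n else 0 := by
    intro u v
    simp only [PauliOp, Matrix.of_apply]
    have h1 : ∀ R : Fin n → Fin 4,
        (∏ i, pauli1 (R i) (u i) (v i)) * ∏ i, pauli1 (R i) (s i) (t i)
          = ∏ i, (pauli1 (R i) (u i) (v i) * pauli1 (R i) (s i) (t i)) := fun R =>
      Finset.prod_mul_distrib.symm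
    simp only [h1]
    rw [show (∑ R : Fin n → Fin 4, ∏ i, (pauli1 (R i) (u i) (v i) * pauli1 (R i) (s i) (t i)))
        = ∏ i, ∑ a : Fin 4, pauli1 a (u i) (v i) * pauli1 a (s i) (t i) from
      (Fintype.prod_sum fun i a => pauli1 a (u i) (v i) * pauli1 a (s i) (t i)).symm]
    simp only [pauli1_complete]
    by_cases h : u = t ∧ v = s
    · obtain ⟨ha, hb⟩ := h
      subst ha; subst hb
      simp
    · rw [if_neg h]
      have : ∃ i, ¬(u i = t i ∧ v i = s i) := by
        by_contra hc
        push_neg at hc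
        exact h ⟨funext fun i => (hc i).1, funext fun i => (hc i).2⟩
      obtain ⟨i, hi⟩ := this
      exact Finset.prod_eq_zero (Finset.mem_univ i) (if_neg hi)
  have tr_eq : ∀ R : Fin n → Fin 4,
      (PauliOp n R * A).trace = ∑ u, ∑ v, PauliOp n R u v * A v u := by
    intro R
    rw [Matrix.trace]
    simp [Matrix.mul_apply, Matrix.diag_apply]
  simp only [tr_eq, Finset.sum_mul]
  have swap : (∑ R : Fin n → Fin 4, ∑ u, ∑ v, PauliOp n R u v * A v u * PauliOp n R s t)
      = ∑ u, ∑ v, A v u * ∑ R : Fin n → Fin 4, PauliOp n R u v * PauliOp n R s t := by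
    rw [Finset.sum_comm]
    refine Finset.sum_congr rfl fun u _ => ?_
    rw [Finset.sum_comm]
    refine Finset.sum_congr rfl fun v _ => ?_
    rw [Finset.mul_sum]
    exact Finset.sum_congr rfl fun R _ => by ring
  rw [swap]
  simp only [key, mul_ite, mul_zero, ite_and]
  simp [Finset.sum_ite_eq']
  field_simp


/-- for Hermitian `A` and `α : 𝒫ₙ → ℝ`,
`tr[(∑_P α(P) P A P)²] = (1/d) ∑_R (∑_P α(P)(−1)^{R·P})² tr(RA)²`. -/
theorem stmt_12 (n : ℕ) (hn : 1 ≤ n)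
    (A : Matrix (Fin n → Fin 2) (Fin n → Fin 2) ℂ) (hA : A.IsHermitian)
    (α : (Fin n → Fin 4) → ℝ) :
    ((∑ P : Fin n → Fin 4, (α P : ℂ) • (PauliOp n P * A * PauliOp n P)) ^ 2).trace =
      (2 ^ n : ℂ)⁻¹ * ∑ R : Fin n → Fin 4,
        (((∑ P : Fin n → Fin 4, α P * commSign (PauliOp n R) (PauliOp n P) : ℝ)) : ℂ) ^ 2 *
          ((PauliOp n R * A).trace) ^ 2 := by
  have h2n : (2 : ℂ) ^ n ≠ 0 := pow_ne_zero _ two_ne_zero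
  set c : (Fin n → Fin 4) → ℂ := fun R => (PauliOp n R * A).trace with hc
  set x : (Fin n → Fin 4) → ℂ :=
    fun R => (∑ P : Fin n → Fin 4, (α P : ℂ) * (((∏ i, sg (P i) (R i)) : ℝ) : ℂ)) * c R with hx
  -- Step 1: rewrite the sum as a Pauli combination
  have key : ∀ P : Fin n → Fin 4, PauliOp n P * A * PauliOp n P
      = ((2 : ℂ) ^ n)⁻¹ • ∑ R : Fin n → Fin 4,
          (c R * (((∏ i, sg (P i) (R i)) : ℝ) : ℂ)) • PauliOp n R := by
    intro P
    conv_lhs => rw [← PauliOp_complete A]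
    rw [Matrix.mul_smul, Matrix.smul_mul]
    congr 1
    rw [Finset.mul_sum, Finset.sum_mul]
    refine Finset.sum_congr rfl fun R _ => ?_
    rw [Matrix.mul_smul, Matrix.smul_mul, PauliOp_conj, smul_smul]
  have hM : (∑ P : Fin n → Fin 4, (α P : ℂ) • (PauliOp n P * A * PauliOp n P))
      = ((2 : ℂ) ^ n)⁻¹ • ∑ R : Fin n → Fin 4, x R • PauliOp n R := by
    simp only [key, Finset.smul_sum, smul_smul]
    rw [Finset.sum_comm]
    refine Finset.sum_congr rfl fun R _ => ?_
    rw [← Finset.sum_smul]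
    congr 1
    simp only [hx]
    rw [Finset.sum_mul, Finset.mul_sum]
    exact Finset.sum_congr rfl fun P _ => by ring
  -- Step 2: trace of the square
  have tr2 : ((∑ R : Fin n → Fin 4, x R • PauliOp n R)
      * (∑ R' : Fin n → Fin 4, x R' • PauliOp n R')).trace
        = (2 : ℂ) ^ n * ∑ R : Fin n → Fin 4, x R ^ 2 := by
    rw [Finset.sum_mul, Matrix.trace_sum]
    have h1 : ∀ R : Fin n → Fin 4,
        ((x R • PauliOp n R) * ∑ R' : Fin n → Fin 4, x R' • PauliOp n R').trace
          = (2 : ℂ) ^ n * (x R ^ 2) := by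
      intro R
      rw [Finset.mul_sum, Matrix.trace_sum]
      have h2 : ∀ R' : Fin n → Fin 4, ((x R • PauliOp n R) * (x R' • PauliOp n R')).trace
          = x R * x R' * (if R = R' then (2 : ℂ) ^ n else 0) := by
        intro R'
        rw [smul_mul_assoc, mul_smul_comm, smul_smul, Matrix.trace_smul,
          PauliOp_mul_trace, smul_eq_mul]
      simp only [h2, mul_ite, mul_zero, Finset.sum_ite_eq Finset.univ R, Finset.mem_univ,
        if_true]
      ring
    simp only [h1, ← Finset.mul_sum]
  rw [hM, sq, smul_mul_assoc, mul_smul_comm, smul_smul, Matrix.trace_smul, smul_eq_mul, tr2]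
  rw [show ((2:ℂ)^n)⁻¹ * ((2:ℂ)^n)⁻¹ * ((2:ℂ)^n * (∑ R : Fin n → Fin 4, x R ^ 2))
      = ((2:ℂ)^n)⁻¹ * ∑ R : Fin n → Fin 4, x R ^ 2 from by field_simp]
  congr 1
  refine Finset.sum_congr rfl fun R _ => ?_
  have hco : ((∑ P : Fin n → Fin 4, α P * commSign (PauliOp n R) (PauliOp n P) : ℝ) : ℂ)
      = ∑ P : Fin n → Fin 4, (α P : ℂ) * (((∏ i, sg (P i) (R i)) : ℝ) : ℂ) := by
    push_cast
    refine Finset.sum_congr rfl fun P _ => ?_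
    rw [commSign_eq]
    push_cast
    ring
  rw [hco]
  simp only [hx, hc]
  ring
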